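/- arXiv:1404.6032 — 2 statements merged into one kernel-verified Lean document; each statement's English description precedes it below -/
import Mathlib

section
/- Let d ≥ 2, let a ∈ M_n^d be broad, let 0 ≤ N ≤ (d−1)n² + 1, and suppose H_1,…,H_N ∈ M_n^d are linearly independent modulo the subspace {(a_rΓ − Γa_r)_{r=1}^d : Γ ∈ M_n} of M_n^d. Then for every K_1,…,K_N ∈ M_n and every M ∈ M_n there exists a free polynomial p in d variables such that p(a) = M and Dp(a)[H_i] = K_i for all 1 ≤ i ≤ N. -/
open Matrix Filter Topology
open scoped Matrix.Norms.L2Operator Kronecker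

noncomputable section

/-- `n × n` complex matrices, with the `L²` operator norm. -/
abbrev Mat (n : ℕ) : Type := Matrix (Fin n) (Fin n) ℂ

/-- `d`-tuples of `n × n` complex matrices, normed by the max of the operator norms. -/
abbrev MatTup (d n : ℕ) : Type := Fin d → Mat n

/-- `M^d`, the disjoint union over all `n` of the `d`-tuples of `n × n` matrices. -/
abbrev MSpace (d : ℕ) : Type := Σ n : ℕ, MatTup d n

/-- Free (noncommutative) polynomials in `d` variables over `ℂ`. -/
abbrev FreePoly (d : ℕ) : Type := FreeAlgebra ℂ (Fin d)

/-- Evaluation of a free polynomial at a `d`-tuple of matrices. -/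
def polyEval {d n : ℕ} (p : FreePoly d) (x : MatTup d n) : Mat n :=
  FreeAlgebra.lift ℂ (fun i => x i) p

/-- The (Fréchet) derivative of the evaluation of a free polynomial, `Dp(a)[h]`. -/
def polyDeriv {d n : ℕ} (p : FreePoly d) (a h : MatTup d n) : Mat n :=
  fderiv ℂ (fun x : MatTup d n => polyEval p x) a h

/-- Assemble a `2 × 2` block matrix.  -/
def blk {n m : ℕ} (A : Matrix (Fin n) (Fin n) ℂ) (B : Matrix (Fin n) (Fin m) ℂ)
    (C : Matrix (Fin m) (Fin n) ℂ) (D : Matrix (Fin m) (Fin m) ℂ) : Mat (n + m) :=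
  Matrix.reindex finSumFinEquiv finSumFinEquiv (Matrix.fromBlocks A B C D)

/-- Coordinatewise direct sum of tuples of matrices. -/
def dSum {d n m : ℕ} (x : MatTup d n) (y : MatTup d m) : MatTup d (n + m) :=
  fun r => blk (x r) 0 0 (y r)

/-- Coordinatewise conjugation `s⁻¹ x s`. -/
def simConj {d n : ℕ} (s : Mat n) (x : MatTup d n) : MatTup d n :=
  fun r => s⁻¹ * x r * s

/-- An nc domain: a d.u. open subset of `M^d` closed under direct sums and unitary
conjugations. -/
structure IsNCDomain {d : ℕ} (Ω : Set (MSpace d)) : Prop where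
  duOpen : ∀ n : ℕ, IsOpen {x : MatTup d n | (⟨n, x⟩ : MSpace d) ∈ Ω}
  dsum_mem : ∀ {n m : ℕ} (x : MatTup d n) (y : MatTup d m),
    (⟨n, x⟩ : MSpace d) ∈ Ω → (⟨m, y⟩ : MSpace d) ∈ Ω →
    (⟨n + m, dSum x y⟩ : MSpace d) ∈ Ω
  unitary_mem : ∀ {n : ℕ} (u : Matrix.unitaryGroup (Fin n) ℂ) (x : MatTup d n),
    (⟨n, x⟩ : MSpace d) ∈ Ω → (⟨n, simConj (u : Mat n) x⟩ : MSpace d) ∈ Ω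

/-- A d.u. open subset of `M^d`: each slice is open. -/
def DUOpen {d : ℕ} (U : Set (MSpace d)) : Prop :=
  ∀ n : ℕ, IsOpen {x : MatTup d n | (⟨n, x⟩ : MSpace d) ∈ U}

/-- An nc function on `Ω`: a graded function respecting direct sums and similarities. -/
structure IsNCFunctionOn {d : ℕ} (Ω : Set (MSpace d)) (f : ∀ n, MatTup d n → Mat n) : Prop where
  dsum_eq : ∀ {n m : ℕ} (x : MatTup d n) (y : MatTup d m),
    (⟨n, x⟩ : MSpace d) ∈ Ω → (⟨m, y⟩ : MSpace d) ∈ Ω →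
    (⟨n + m, dSum x y⟩ : MSpace d) ∈ Ω →
    f (n + m) (dSum x y) = blk (f n x) 0 0 (f m y)
  sim_eq : ∀ {n : ℕ} (s : Mat n) (x : MatTup d n), IsUnit s →
    (⟨n, x⟩ : MSpace d) ∈ Ω → (⟨n, simConj s x⟩ : MSpace d) ∈ Ω →
    f n (simConj s x) = s⁻¹ * f n x * s

/-- A fine open set: a union of nc domains. -/
def FineOpen {d : ℕ} (U : Set (MSpace d)) : Prop :=
  ∀ x ∈ U, ∃ Ω : Set (MSpace d), IsNCDomain Ω ∧ x ∈ Ω ∧ Ω ⊆ U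

/-- A fine holomorphic function: an nc function on a fine open set, locally bounded in
the fine topology. -/
def IsFineHolo {d : ℕ} (U : Set (MSpace d)) (f : ∀ n, MatTup d n → Mat n) : Prop :=
  FineOpen U ∧ IsNCFunctionOn U f ∧
    ∀ a ∈ U, ∃ Ω : Set (MSpace d), IsNCDomain Ω ∧ a ∈ Ω ∧ Ω ⊆ U ∧
      ∃ C : ℝ, ∀ x ∈ Ω, ‖f x.1 x.2‖ ≤ C

/-- `a^{(k)}`, the direct sum of `k` copies of `a`. -/
def ampTup {d n : ℕ} (k : ℕ) (a : MatTup d n) : MatTup d (k * n) :=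
  fun r => Matrix.reindex finProdFinEquiv finProdFinEquiv
    ((1 : Matrix (Fin k) (Fin k) ℂ) ⊗ₖ a r)

/-- The basic fat neighborhood `F(a,r)`: all unitary conjugates of points within `r`
of some `a^{(k)}`. -/
def FBall {d : ℕ} (a : MSpace d) (r : ℝ) : Set (MSpace d) :=
  {y | ∃ k : ℕ, 1 ≤ k ∧ ∃ x : MatTup d (k * a.1), ‖x - ampTup k a.2‖ < r ∧
    ∃ u : Matrix.unitaryGroup (Fin (k * a.1)) ℂ,
      y = ⟨k * a.1, simConj (u : Mat (k * a.1)) x⟩}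

/-- A fat open set. -/
def FatOpen {d : ℕ} (U : Set (MSpace d)) : Prop :=
  ∀ y ∈ U, ∃ ε : ℝ, 0 < ε ∧ FBall y ε ⊆ U

/-- A fat holomorphic function: an nc function on a fat open set, locally bounded in the
fat topology. -/
def IsFatHolo {d : ℕ} (U : Set (MSpace d)) (f : ∀ n, MatTup d n → Mat n) : Prop :=
  FatOpen U ∧ IsNCFunctionOn U f ∧
    ∀ a ∈ U, ∃ ε : ℝ, 0 < ε ∧ FBall a ε ⊆ U ∧
      ∃ C : ℝ, ∀ x ∈ FBall a ε, ‖f x.1 x.2‖ ≤ C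

/-- The Hessian `Hf(a)[h,k]`: the derivative in direction `k` of `x ↦ Df(x)[h]`. -/
def ncHess {d n : ℕ} (f : ∀ m, MatTup d m → Mat m) (a h k : MatTup d n) : Mat n :=
  fderiv ℂ (fun x : MatTup d n => fderiv ℂ (f n) x h) a k

/-- Join a `(d-k)`-tuple and a `k`-tuple into a `d`-tuple. -/
def joinTup {d k : ℕ} (hk : k ≤ d) {n : ℕ} (y : Fin (d - k) → Mat n) (z : Fin k → Mat n) :
    Fin d → Mat n :=
  fun j => if hj : (j : ℕ) < d - k then y ⟨j, hj⟩
    else z ⟨(j : ℕ) - (d - k), by have := j.isLt; omega⟩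

/-- A tuple `a` is broad if every matrix is a polynomial in `a`. -/
def Broad {d n : ℕ} (a : MatTup d n) : Prop :=
  ∀ M : Mat n, ∃ p : FreePoly d, polyEval p a = M

/-- The ampliation `id_k ⊗ L` of a map `L : M_n^d → M_n`, acting blockwise on
`M_{kn}^d` (identifying `M_{kn}` with `k × k` block matrices over `M_n`). -/
def ampFun {d n : ℕ} (L : MatTup d n → Mat n) (k : ℕ) (H : MatTup d (k * n)) : Mat (k * n) :=
  fun p q =>
    L (fun r s t => H r (finProdFinEquiv ((finProdFinEquiv.symm p).1, s))
        (finProdFinEquiv ((finProdFinEquiv.symm q).1, t)))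
      (finProdFinEquiv.symm p).2 (finProdFinEquiv.symm q).2

/-- The set of operator norms of right inverses of the ampliation `L_k`. -/
def RightInvVals {d n : ℕ} (L : MatTup d n → Mat n) (k : ℕ) : Set ℝ :=
  {c | ∃ S : Mat (k * n) →L[ℂ] MatTup d (k * n), (∀ Y, ampFun L k (S Y) = Y) ∧ ‖S‖ = c}

/-- `L` is completely nonsingular: every ampliation has a right inverse, and
`sup_k inf {‖R‖ : R right inverse of L_k} < ∞`. -/
def CompletelyNonsingular {d n : ℕ} (L : MatTup d n → Mat n) : Prop :=
  (∀ k : ℕ, 1 ≤ k → (RightInvVals L k).Nonempty) ∧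
    BddAbove {c : ℝ | ∃ k : ℕ, 1 ≤ k ∧ c = sInf (RightInvVals L k)}

/-- `c(L) = (sup_k inf {‖R‖ : R right inverse of L_k})⁻¹`. -/
def cConst {d n : ℕ} (L : MatTup d n → Mat n) : ℝ :=
  (sSup {c : ℝ | ∃ k : ℕ, 1 ≤ k ∧ c = sInf (RightInvVals L k)})⁻¹

/-- Evaluation of a `J × J` matrix of free polynomials at `x ∈ M_n^d`, as an
`Jn × Jn` matrix. -/
def matPolyEval {d J n : ℕ} (δ : Matrix (Fin J) (Fin J) (FreePoly d)) (x : MatTup d n) :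
    Matrix (Fin (J * n)) (Fin (J * n)) ℂ :=
  fun p q => polyEval (δ (finProdFinEquiv.symm p).1 (finProdFinEquiv.symm q).1) x
    (finProdFinEquiv.symm p).2 (finProdFinEquiv.symm q).2

/-- The basic free open set `G_δ = {x : ‖δ(x)‖ < 1}`. -/
def GSet {d J : ℕ} (δ : Matrix (Fin J) (Fin J) (FreePoly d)) : Set (MSpace d) :=
  {x | ‖matPolyEval δ x.2‖ < 1}

/-- The linear map `Γ ↦ aΓ - Γa` from `M_n` to `M_n^d`. -/
def commMap {d n : ℕ} (a : MatTup d n) : Mat n →ₗ[ℂ] MatTup d n where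
  toFun := fun Γ => fun r => a r * Γ - Γ * a r
  map_add' := by
    intro Γ₁ Γ₂
    funext r
    simp only [Matrix.mul_add, Matrix.add_mul, Pi.add_apply]
    abel
  map_smul' := by
    intro c Γ
    funext r
    simp [Matrix.mul_smul, Matrix.smul_mul, smul_sub]

/-- The subspace `{aΓ - Γa : Γ ∈ M_n}` of `M_n^d`. -/
def commSubspace {d n : ℕ} (a : MatTup d n) : Submodule ℂ (MatTup d n) :=
  LinearMap.range (commMap a)

end

/-!
The tuples `(Dq(a)[Hᵢ])ᵢ` with `q(a) = 0` form a subspace `W` of `M_nᴺ`, and since `a` is broad,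
`W` is stable under `(Kᵢ)ᵢ ↦ (A Kᵢ B)ᵢ`. Such a sub-bimodule of `M_nᴺ` is everything unless some
`c ≠ 0` satisfies `∑ cᵢ Kᵢ = 0` on all of `W`. For such `c`, the direction `h = ∑ cᵢ Hᵢ` has
`Dq(a)[h] = 0` whenever `q(a) = 0`, so `q(a) ↦ Dq(a)[h]` is a well-defined derivation of `M_n`.
Every derivation of `M_n` is inner, whence `h = aΓ - Γa`, contradicting the independence of the `Hᵢ`
modulo commutators. Once `W = M_nᴺ`, a polynomial `p₀` with `p₀(a) = M` is corrected by some `q`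
with `q(a) = 0` and `Dq(a)[Hᵢ] = Kᵢ - Dp₀(a)[Hᵢ]`.
-/

namespace Matrix

variable {m : Type*} [Fintype m] [DecidableEq m]

theorem exists_eq_mul_sub_mul_of_leibniz {R : Type*} [CommRing R]
    (δ : Matrix m m R →ₗ[R] Matrix m m R)
    (hδ : ∀ x y, δ (x * y) = δ x * y + x * δ y) :
    ∃ Γ : Matrix m m R, ∀ M, δ M = M * Γ - Γ * M := by
  rcases isEmpty_or_nonempty m with _ | ⟨⟨z⟩⟩
  · exact ⟨0, fun _ => Subsingleton.elim _ _⟩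
  set Γ := ∑ k, single k z (1 : R) * δ (single z k 1)
  have hsum : ∀ M, ∑ k, single k z (1 : R) * δ (single z k 1 * M) = M * Γ := by
    intro M
    induction M using Matrix.induction_on' with
    | h_zero => simp
    | h_add p q hp hq => simp only [mul_add, add_mul, map_add, Finset.sum_add_distrib, hp, hq]
    | h_std_basis i j x =>
      rw [Finset.sum_eq_single i, Finset.mul_sum, Finset.sum_eq_single j]
      · have hsingle : ∀ a b : m, single a b x = x • single a b (1 : R) := by simp [smul_single]
        rw [single_mul_single_same, ← mul_assoc, single_mul_single_same, one_mul, mul_one,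
          hsingle, hsingle, map_smul, mul_smul_comm, smul_mul_assoc]
      · intro k _ hk
        rw [← mul_assoc, single_mul_single_of_ne _ _ _ _ (Ne.symm hk), zero_mul]
      · simp
      · intro k _ hk
        rw [single_mul_single_of_ne _ _ _ _ hk, map_zero, mul_zero]
      · simp
  refine ⟨Γ, fun M => ?_⟩
  have hΓM : Γ * M = M * Γ - δ M := by
    calc Γ * M = ∑ k, single k z (1 : R) * (δ (single z k 1 * M) - single z k 1 * δ M) := by
          simp only [Γ, Finset.sum_mul, mul_assoc, hδ, add_sub_cancel_right]
      _ = M * Γ - δ M := by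
          simp only [mul_sub, Finset.sum_sub_distrib, hsum, ← mul_assoc, single_mul_single_same,
            mul_one, ← Finset.sum_mul, sum_single_one, one_mul]
  rw [hΓM, sub_sub_cancel]

theorem smul_entry_mem_of_mul_mul_mem {K ι : Type*} [CommSemiring K]
    {W : Submodule K (ι → Matrix m m K)}
    (hW : ∀ A B, ∀ X ∈ W, (fun i => A * X i * B) ∈ W) {X : ι → Matrix m m K} (hX : X ∈ W)
    (s t : m) (T : Matrix m m K) : (fun i => X i s t • T) ∈ W := by
  have hsingle : ∀ u w, (fun i => X i s t • single u w (T u w)) ∈ W := by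
    intro u w
    convert hW (single u s (T u w)) (single t w 1) X hX using 2 with i
    rw [single_mul_mul_single, mul_one, smul_single, smul_eq_mul, mul_comm]
  have hT : (fun i => X i s t • T) = ∑ u, ∑ w, fun i => X i s t • single u w (T u w) := by
    ext1 i
    simp only [Finset.sum_apply, ← Finset.smul_sum, ← matrix_eq_sum_single]
  rw [hT]
  exact sum_mem fun u _ => sum_mem fun w _ => hsingle u w

theorem eq_top_of_mul_mul_mem {K ι : Type*} [Field K] [Fintype ι]
    {W : Submodule K (ι → Matrix m m K)}
    (hW : ∀ A B, ∀ X ∈ W, (fun i => A * X i * B) ∈ W)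
    (hann : ∀ c : ι → K, (∀ X ∈ W, ∑ i, c i • X i = 0) → c = 0) : W = ⊤ := by
  classical
  -- Entry vectors of elements of `W` lie in `V`, so a functional vanishing on `V` gives a `c`.
  let V : Submodule K (ι → K) :=
    { carrier := {v | ∀ T : Matrix m m K, (fun i => v i • T) ∈ W}
      add_mem' := fun hv hw T => by
        convert add_mem (hv T) (hw T) using 1; ext1; simp [add_smul]
      zero_mem' := fun T => by convert W.zero_mem; ext1; simp
      smul_mem' := fun c v hv T => by
        convert W.smul_mem c (hv T) using 1; ext1; simp [smul_smul] }
  have hV : V = ⊤ := by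
    rw [← Submodule.dualAnnihilator_eq_bot_iff, Submodule.eq_bot_iff]
    intro f hf
    rw [Submodule.mem_dualAnnihilator] at hf
    have hc := hann (fun i => f (Pi.single i 1)) fun X hX => by
      ext s t
      have := hf _ (smul_entry_mem_of_mul_mul_mem hW hX s t)
      rw [← (Pi.basisFun K ι).sum_repr (fun i => X i s t), map_sum] at this
      simpa [Matrix.sum_apply, mul_comm] using this
    exact (Pi.basisFun K ι).ext fun i => by simpa using congrFun hc i
  rw [eq_top_iff]
  intro X _
  rw [← Finset.univ_sum_single X]
  refine sum_mem fun j _ => ?_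
  have := (hV ▸ Submodule.mem_top : Pi.single j 1 ∈ V) (X j)
  convert this using 1
  ext1 i
  by_cases h : i = j <;> simp [h]

end Matrix

section PolyDeriv

variable {d n : ℕ}

@[simp]
theorem polyEval_add (p q : FreePoly d) (x : MatTup d n) :
    polyEval (p + q) x = polyEval p x + polyEval q x :=
  map_add (FreeAlgebra.lift ℂ x) p q

@[simp]
theorem polyEval_smul (c : ℂ) (p : FreePoly d) (x : MatTup d n) :
    polyEval (c • p) x = c • polyEval p x :=
  map_smul (FreeAlgebra.lift ℂ x) c p

@[simp]
theorem polyEval_mul (p q : FreePoly d) (x : MatTup d n) :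
    polyEval (p * q) x = polyEval p x * polyEval q x :=
  map_mul (FreeAlgebra.lift ℂ x) p q

@[simp]
theorem polyEval_ι (r : Fin d) (x : MatTup d n) : polyEval (FreeAlgebra.ι ℂ r) x = x r :=
  FreeAlgebra.lift_ι_apply _ _

theorem differentiable_polyEval (p : FreePoly d) :
    Differentiable ℂ fun x : MatTup d n => polyEval p x := by
  induction p using FreeAlgebra.induction with
  | grade0 c => simp [polyEval]
  | grade1 r => simpa only [polyEval_ι] using differentiable_apply r
  | mul p q hp hq => simp only [polyEval_mul]; exact hp.mul hq
  | add p q hp hq => simp only [polyEval_add]; exact hp.add hq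

theorem polyDeriv_add (p q : FreePoly d) (a h : MatTup d n) :
    polyDeriv (p + q) a h = polyDeriv p a h + polyDeriv q a h := by
  simp only [polyDeriv, polyEval_add]
  rw [fderiv_fun_add (differentiable_polyEval p a) (differentiable_polyEval q a)]
  rfl

theorem polyDeriv_smul (c : ℂ) (p : FreePoly d) (a h : MatTup d n) :
    polyDeriv (c • p) a h = c • polyDeriv p a h := by
  simp only [polyDeriv, polyEval_smul]
  rw [fderiv_fun_const_smul (differentiable_polyEval p a)]
  rfl

theorem polyDeriv_mul (p q : FreePoly d) (a h : MatTup d n) :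
    polyDeriv (p * q) a h = polyEval p a * polyDeriv q a h + polyDeriv p a h * polyEval q a := by
  simp only [polyDeriv, polyEval_mul]
  rw [fderiv_fun_mul' (differentiable_polyEval p a) (differentiable_polyEval q a)]
  rfl

theorem polyDeriv_ι (r : Fin d) (a h : MatTup d n) : polyDeriv (FreeAlgebra.ι ℂ r) a h = h r := by
  simp only [polyDeriv, polyEval_ι]
  rw [(hasFDerivAt_apply r a).fderiv]
  rfl

end PolyDeriv

theorem LinearMap.exists_comp_eq_of_surjective_of_ker_le {R M M₂ M₃ : Type*} [Ring R]
    [AddCommGroup M] [AddCommGroup M₂] [AddCommGroup M₃] [Module R M] [Module R M₂]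
    [Module R M₃] {f : M →ₗ[R] M₂} (hf : Function.Surjective f) {g : M →ₗ[R] M₃}
    (hfg : LinearMap.ker f ≤ LinearMap.ker g) : ∃ δ : M₂ →ₗ[R] M₃, δ ∘ₗ f = g :=
  ⟨(LinearMap.ker f).liftQ g hfg ∘ₗ (f.quotKerEquivOfSurjective hf).symm.toLinearMap,
    LinearMap.ext fun x => by simp⟩

noncomputable section PolyDerivLinear

variable {d n : ℕ}

def polyDerivLinear (a h : MatTup d n) : FreePoly d →ₗ[ℂ] Mat n where
  toFun p := polyDeriv p a h
  map_add' p q := polyDeriv_add p q a h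
  map_smul' c p := polyDeriv_smul c p a h

def vanishingPolyDerivs {ι : Type*} (a : MatTup d n) (H : ι → MatTup d n) :
    Submodule ℂ (ι → Mat n) :=
  (LinearMap.ker (FreeAlgebra.lift ℂ a).toLinearMap).map
    (LinearMap.pi fun i => polyDerivLinear a (H i))

theorem mem_vanishingPolyDerivs {ι : Type*} {a : MatTup d n} {H : ι → MatTup d n}
    {K : ι → Mat n} :
    K ∈ vanishingPolyDerivs a H ↔ ∃ p, polyEval p a = 0 ∧ (fun i => polyDeriv p a (H i)) = K :=
  Iff.rfl

theorem mul_mul_mem_vanishingPolyDerivs {ι : Type*} {a : MatTup d n} (ha : Broad a)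
    {H : ι → MatTup d n} (A B : Mat n) (K : ι → Mat n) (hK : K ∈ vanishingPolyDerivs a H) :
    (fun i => A * K i * B) ∈ vanishingPolyDerivs a H := by
  obtain ⟨p, hp, rfl⟩ := mem_vanishingPolyDerivs.mp hK
  obtain ⟨qA, rfl⟩ := ha A
  obtain ⟨qB, rfl⟩ := ha B
  refine mem_vanishingPolyDerivs.mpr ⟨qA * p * qB, by simp [hp], funext fun i => ?_⟩
  simp [polyDeriv_mul, hp]

theorem mem_commSubspace_of_polyDeriv_eq_zero {a : MatTup d n} (ha : Broad a) {h : MatTup d n}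
    (hh : ∀ p, polyEval p a = 0 → polyDeriv p a h = 0) : h ∈ commSubspace a := by
  obtain ⟨δ, hδ⟩ := LinearMap.exists_comp_eq_of_surjective_of_ker_le
    (f := (FreeAlgebra.lift ℂ a).toLinearMap) ha (g := polyDerivLinear a h) hh
  have hδp : ∀ p, δ (polyEval p a) = polyDeriv p a h := fun p => LinearMap.congr_fun hδ p
  have hleibniz : ∀ x y, δ (x * y) = δ x * y + x * δ y := by
    intro x y
    obtain ⟨p, rfl⟩ := ha x
    obtain ⟨q, rfl⟩ := ha y
    rw [← polyEval_mul, hδp, hδp, hδp, polyDeriv_mul, add_comm]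
  obtain ⟨Γ, hΓ⟩ := Matrix.exists_eq_mul_sub_mul_of_leibniz δ hleibniz
  refine ⟨Γ, funext fun r => ?_⟩
  have := hΓ (a r)
  rw [← polyEval_ι r a, hδp, polyDeriv_ι, polyEval_ι] at this
  exact this.symm

theorem vanishingPolyDerivs_eq_top {ι : Type*} [Fintype ι] {a : MatTup d n} (ha : Broad a)
    {H : ι → MatTup d n}
    (hind : LinearIndependent ℂ fun i => Submodule.Quotient.mk (p := commSubspace a) (H i)) :
    vanishingPolyDerivs a H = ⊤ := by
  refine Matrix.eq_top_of_mul_mul_mem (mul_mul_mem_vanishingPolyDerivs ha) fun c hc => ?_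
  have hmem : ∑ i, c i • H i ∈ commSubspace a :=
    mem_commSubspace_of_polyDeriv_eq_zero ha fun p hp => by
      rw [polyDeriv, map_sum]
      simp only [map_smul]
      exact hc _ (mem_vanishingPolyDerivs.mpr ⟨p, hp, rfl⟩)
  rw [← Submodule.Quotient.mk_eq_zero, ← Submodule.mkQ_apply, map_sum] at hmem
  simp only [map_smul, Submodule.mkQ_apply] at hmem
  exact funext (Fintype.linearIndependent_iff.mp hind c hmem)

end PolyDerivLinear

theorem prescribe_value_and_derivatives_general (d n N : ℕ) (a : MatTup d n) (ha : Broad a)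
    (H : Fin N → MatTup d n)
    (hind : LinearIndependent ℂ fun i : Fin N =>
      Submodule.Quotient.mk (p := commSubspace a) (H i)) :
    ∀ (K : Fin N → Mat n) (M : Mat n),
      ∃ p : FreePoly d, polyEval p a = M ∧ ∀ i, polyDeriv p a (H i) = K i := by
  intro K M
  obtain ⟨p₀, rfl⟩ := ha M
  obtain ⟨q, hq, hqK⟩ := mem_vanishingPolyDerivs.mp <|
    Submodule.eq_top_iff'.mp (vanishingPolyDerivs_eq_top ha hind)
      (K - fun i => polyDeriv p₀ a (H i))
  refine ⟨p₀ + q, by rw [polyEval_add, hq, add_zero], fun i => ?_⟩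
  rw [polyDeriv_add, congrFun hqK i, Pi.sub_apply, add_sub_cancel]

/-- If `a ∈ M_n^d` is broad and `H₁,…,H_N` are linearly independent modulo
`{aΓ - Γa : Γ ∈ M_n}`, with `N ≤ (d-1)n² + 1`, then one can prescribe the value and
the derivatives in the directions `Hᵢ` of a free polynomial at `a` arbitrarily. -/
theorem prescribe_value_and_derivatives (d n N : ℕ) (hd : 2 ≤ d)
    (hN : N ≤ (d - 1) * n ^ 2 + 1) (a : MatTup d n) (ha : Broad a)
    (H : Fin N → MatTup d n)
    (hind : LinearIndependent ℂ fun i : Fin N =>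
      Submodule.Quotient.mk (p := commSubspace a) (H i)) :
    ∀ (K : Fin N → Mat n) (M : Mat n),
      ∃ p : FreePoly d, polyEval p a = M ∧ ∀ i, polyDeriv p a (H i) = K i :=
  prescribe_value_and_derivatives_general d n N a ha H hind
end

section
/- Let Ω ⊆ M^d be an nc domain, let f be a fine holomorphic function on Ω, let a ∈ Ω ∩ M_n^d, and let Γ ∈ M_n. Then Df(a)[aΓ − Γa] = f(a)Γ − Γf(a), where aΓ − Γa denotes the d-tuple (a_rΓ − Γa_r)_{r=1}^d. -/
open Matrix Filter Topology
open scoped Matrix.Norms.L2Operator Kronecker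

/-!
Everything happens in block upper triangular tuples `[[x, k], [0, y]]`. Conjugating `x ⊕ y` by
`[[1, G], [0, 1]]` gives `[[x, xG - Gy], [0, y]]`, so the upper right block `Δf(x, y)[k]` of
`f [[x, k], [0, y]]` satisfies `Δf(x, y)[xG - Gy] = f(x)G - Gf(y)`; conjugating by `diag(1, t)`
shows that it is homogeneous in `k`. With `G = 1` this reads `f(x) - f(y) = Δf(x, y)[x - y]`,
and homogeneity turns the local bound on `Δf` into a Lipschitz bound for `f`; applied one level
up, it makes `Δf` Lipschitz near `(a, a, 0)`. Then `f(a + h) - f(a) = Δf(a + h, a)[h]` is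
`Δf(a, a)[h] + O(‖h‖²)`, and telescoping `a → a + u → a + u + w` in the same way shows that
`Δf(a, a)` is additive near `0`. So `Δf(a, a)` is `Df(a)`, and `G = Γ` gives the theorem.
-/

open Metric Asymptotics
open scoped NNReal

section LocalDivDiff

variable {𝕜 E F : Type*} [RCLike 𝕜] [NormedAddCommGroup E] [NormedSpace 𝕜 E]
  [NormedAddCommGroup F] [NormedSpace 𝕜 F]

lemma mem_ball_prod_prod {α β γ : Type*} [PseudoMetricSpace α] [PseudoMetricSpace β]
    [PseudoMetricSpace γ] {x a : α} {y b : β} {k c : γ} {r : ℝ} :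
    (x, y, k) ∈ ball (a, b, c) r ↔ x ∈ ball a r ∧ y ∈ ball b r ∧ k ∈ ball c r := by
  simp only [← ball_prod_same, Set.mem_prod]

variable (𝕜) in
lemma eventually_smul_mem_ball (v : E) {r : ℝ} (hr : 0 < r) :
    ∀ᶠ s in 𝓝[≠] (0 : 𝕜), s ≠ 0 ∧ s • v ∈ ball 0 r := by
  have hv : Tendsto (fun s : 𝕜 => s • v) (𝓝 0) (𝓝 0) := by
    simpa using (tendsto_id (x := 𝓝 (0 : 𝕜))).smul_const v
  exact (eventually_nhdsWithin_of_forall fun s hs => hs).and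
    (nhdsWithin_le_nhds (hv.eventually (ball_mem_nhds 0 hr)))

lemma map_zero_of_map_smul {ψ : E → F} {r : ℝ} (hr : 0 < r)
    (hsmul : ∀ u ∈ ball (0 : E) r, ∀ t : 𝕜, ‖t‖ ≤ 1 → ψ (t • u) = t • ψ u) : ψ 0 = 0 := by
  simpa using hsmul 0 (mem_ball_self hr) 0 (by simp)

lemma inv_smul_map_smul_eq {ψ : E → F} {r : ℝ}
    (hsmul : ∀ u ∈ ball (0 : E) r, ∀ t : 𝕜, ‖t‖ ≤ 1 → ψ (t • u) = t • ψ u)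
    {h : E} {s s' : 𝕜} (hs : s ≠ 0) (hs' : s' ≠ 0) (hsh : s • h ∈ ball 0 r)
    (hs'h : s' • h ∈ ball 0 r) : s⁻¹ • ψ (s • h) = s'⁻¹ • ψ (s' • h) := by
  wlog hss' : ‖s‖ ≤ ‖s'‖ generalizing s s'
  · exact (this hs' hs hs'h hsh (le_of_not_ge hss')).symm
  have hquot : ‖s / s'‖ ≤ 1 := by
    rw [norm_div]; exact div_le_one_of_le₀ hss' (norm_nonneg _)
  rw [show s • h = (s / s') • s' • h by rw [smul_smul, div_mul_cancel₀ _ hs'],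
    hsmul _ hs'h _ hquot, smul_smul, mul_div_assoc', inv_mul_cancel₀ hs, one_div]

lemma norm_le_of_map_smul {g : E → F} {r C : ℝ}
    (hsmul : ∀ k ∈ ball (0 : E) r, ∀ t : 𝕜, ‖t‖ ≤ 1 → g (t • k) = t • g k)
    (hbdd : ∀ k ∈ ball (0 : E) r, ‖g k‖ ≤ C) {k : E} (hk : ‖k‖ < r / 2) :
    ‖g k‖ ≤ 2 * C / r * ‖k‖ := by
  have hr : 0 < r := by linarith [norm_nonneg k]
  rcases eq_or_ne k 0 with rfl | hk0
  · simp [map_zero_of_map_smul hr hsmul]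
  set t : 𝕜 := ((2 * ‖k‖ / r : ℝ) : 𝕜)
  have ht : ‖t‖ = 2 * ‖k‖ / r := by
    rw [RCLike.norm_ofReal, abs_of_nonneg (by positivity)]
  have ht0 : t ≠ 0 := by
    rw [← norm_ne_zero_iff, ht]; positivity
  have hk' : t⁻¹ • k ∈ ball (0 : E) r := by
    rw [mem_ball_zero_iff, norm_smul, norm_inv, ht]
    field_simp
    linarith
  calc ‖g k‖ = ‖t • g (t⁻¹ • k)‖ := by
        rw [← hsmul _ hk' _ (by rw [ht, div_le_one hr]; linarith), smul_inv_smul₀ ht0]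
    _ ≤ 2 * ‖k‖ / r * C := by rw [norm_smul, ht]; gcongr; exact hbdd _ hk'
    _ = 2 * C / r * ‖k‖ := by ring

theorem exists_continuousLinearMap_eqOn_ball {ψ : E → F} {r K : ℝ} (hr : 0 < r)
    (hadd : ∀ u ∈ ball (0 : E) r, ∀ w ∈ ball (0 : E) r, u + w ∈ ball (0 : E) r →
      ψ (u + w) = ψ u + ψ w)
    (hsmul : ∀ u ∈ ball (0 : E) r, ∀ t : 𝕜, ‖t‖ ≤ 1 → ψ (t • u) = t • ψ u)
    (hbound : ∀ u ∈ ball (0 : E) r, ‖ψ u‖ ≤ K * ‖u‖) :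
    ∃ L : E →L[𝕜] F, Set.EqOn L ψ (ball 0 r) := by
  choose c hc using fun h : E => (eventually_smul_mem_ball 𝕜 h hr).exists
  have hval : ∀ h (s : 𝕜), s ≠ 0 → s • h ∈ ball 0 r →
      (c h)⁻¹ • ψ (c h • h) = s⁻¹ • ψ (s • h) :=
    fun h s hs hsh => inv_smul_map_smul_eq hsmul (hc h).1 hs (hc h).2 hsh
  let L : E →ₗ[𝕜] F :=
    { toFun := fun h => (c h)⁻¹ • ψ (c h • h)
      map_add' := fun h k => by
        obtain ⟨s, ⟨hs, hsh⟩, ⟨-, hsk⟩, ⟨-, hshk⟩⟩ := ((eventually_smul_mem_ball 𝕜 h hr).and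
          ((eventually_smul_mem_ball 𝕜 k hr).and (eventually_smul_mem_ball 𝕜 (h + k) hr))).exists
        rw [smul_add] at hshk
        rw [hval _ s hs hsh, hval _ s hs hsk, hval _ s hs (by rwa [smul_add]), smul_add s h k,
          hadd _ hsh _ hsk hshk, smul_add]
      map_smul' := fun t h => by
        rcases eq_or_ne t 0 with rfl | ht
        · simp [map_zero_of_map_smul hr hsmul]
        obtain ⟨s, hs, hsh⟩ := (eventually_smul_mem_ball 𝕜 (t • h) hr).exists
        rw [smul_smul] at hsh
        rw [RingHom.id_apply, hval _ s hs (by rwa [smul_smul]), smul_smul s t h,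
          hval h (s * t) (mul_ne_zero hs ht) hsh, smul_smul, mul_inv, mul_left_comm,
          mul_inv_cancel₀ ht, mul_one] }
  refine ⟨L.mkContinuous K fun h => ?_, fun u hu => ?_⟩
  · have hch := (hc h).2
    calc ‖L h‖ = ‖c h‖⁻¹ * ‖ψ (c h • h)‖ := by simp [L, norm_smul]
      _ ≤ ‖c h‖⁻¹ * (K * (‖c h‖ * ‖h‖)) := by
          gcongr; rw [← norm_smul]; exact hbound _ hch
      _ = K * ‖h‖ := by field_simp [norm_ne_zero_iff.2 (hc h).1]
  · simpa [L] using hval u 1 one_ne_zero (by simpa using hu)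

variable (𝕜) in
structure IsLocalDivDiff (f : E → F) (φ : E → E → E → F) (a : E) (δ : ℝ) : Prop where
  apply_sub : ∀ x y, (x, y, x - y) ∈ ball (a, a, 0) δ → φ x y (x - y) = f x - f y
  map_smul : ∀ x y k, (x, y, k) ∈ ball (a, a, 0) δ → ∀ t : 𝕜, ‖t‖ ≤ 1 →
    φ x y (t • k) = t • φ x y k

namespace IsLocalDivDiff

variable {f : E → F} {φ : E → E → E → F} {a : E} {δ : ℝ} {K : ℝ≥0}

lemma apply_of_sub_eq (hφ : IsLocalDivDiff 𝕜 f φ a δ) {x y k : E} (hk : x - y = k)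
    (hmem : (x, y, k) ∈ ball (a, a, 0) δ) : φ x y k = f x - f y := by
  subst hk; exact hφ.apply_sub x y hmem

lemma map_smul_of_mem (hφ : IsLocalDivDiff 𝕜 f φ a δ) {x y : E} (hx : x ∈ ball a δ)
    (hy : y ∈ ball a δ) : ∀ k ∈ ball (0 : E) δ, ∀ t : 𝕜, ‖t‖ ≤ 1 → φ x y (t • k) = t • φ x y k :=
  fun k hk => hφ.map_smul x y k (mem_ball_prod_prod.2 ⟨hx, hy, hk⟩)

lemma lipschitzOnWith_of_bounded (hφ : IsLocalDivDiff 𝕜 f φ a δ) {C : ℝ}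
    (hC : ∀ p ∈ ball (a, a, (0 : E)) δ, ‖φ p.1 p.2.1 p.2.2‖ ≤ C) :
    LipschitzOnWith (2 * C / δ).toNNReal f (ball a (δ / 4)) := by
  refine lipschitzOnWith_iff_norm_sub_le.2 fun u hu v hv => ?_
  rw [mem_ball_iff_norm] at hu hv
  have hδ : 0 < δ := by linarith [norm_nonneg (u - a)]
  have hu' : u ∈ ball a δ := by rw [mem_ball_iff_norm]; linarith
  have hv' : v ∈ ball a δ := by rw [mem_ball_iff_norm]; linarith
  have huv : ‖u - v‖ < δ / 2 :=
    (norm_sub_le_norm_sub_add_norm_sub u a v).trans_lt (by rw [norm_sub_rev a v]; linarith)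
  rw [← hφ.apply_sub u v (mem_ball_prod_prod.2 ⟨hu', hv', by rw [mem_ball_zero_iff]; linarith⟩)]
  refine (norm_le_of_map_smul (hφ.map_smul_of_mem hu' hv')
    (fun k hk => hC _ (mem_ball_prod_prod.2 ⟨hu', hv', hk⟩)) huv).trans ?_
  gcongr
  exact Real.le_coe_toNNReal _

lemma norm_sub_apply_le (hφ : IsLocalDivDiff 𝕜 f φ a δ)
    (hlip : LipschitzOnWith K (fun p : E × E × E => φ p.1 p.2.1 p.2.2) (ball (a, a, 0) δ))
    {x y x' y' k : E} (hx : x ∈ ball a δ) (hy : y ∈ ball a δ) (hx' : x' ∈ ball a δ)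
    (hy' : y' ∈ ball a δ) (hk : ‖k‖ < δ / 2) :
    ‖φ x y k - φ x' y' k‖ ≤ 2 * K / δ * (‖x - x'‖ + ‖y - y'‖) * ‖k‖ := by
  refine (norm_le_of_map_smul (𝕜 := 𝕜) (g := fun k => φ x y k - φ x' y' k)
    (C := K * (‖x - x'‖ + ‖y - y'‖)) (fun k hk t ht => ?_)
    (fun k hk => ?_) hk).trans_eq (by ring)
  · simp only [hφ.map_smul_of_mem hx hy k hk t ht, hφ.map_smul_of_mem hx' hy' k hk t ht, smul_sub]
  · calc ‖φ x y k - φ x' y' k‖ ≤ K * ‖(x, y, k) - (x', y', k)‖ :=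
          hlip.norm_sub_le (mem_ball_prod_prod.2 ⟨hx, hy, hk⟩)
            (mem_ball_prod_prod.2 ⟨hx', hy', hk⟩)
      _ ≤ K * (‖x - x'‖ + ‖y - y'‖) := by
          gcongr
          simp only [Prod.mk_sub_mk, sub_self, Prod.norm_mk, norm_zero]
          exact max_le (by linarith [norm_nonneg (y - y')])
            (max_le (by linarith [norm_nonneg (x - x')]) (by positivity))

lemma norm_apply_le (hφ : IsLocalDivDiff 𝕜 f φ a δ)
    (hlip : LipschitzOnWith K (fun p : E × E × E => φ p.1 p.2.1 p.2.2) (ball (a, a, 0) δ))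
    {k : E} (hk : k ∈ ball (0 : E) δ) : ‖φ a a k‖ ≤ K * ‖k‖ := by
  have hδ : 0 < δ := pos_of_mem_ball hk
  have h0 : φ a a 0 = 0 := map_zero_of_map_smul hδ
    (hφ.map_smul_of_mem (mem_ball_self hδ) (mem_ball_self hδ))
  simpa [h0] using hlip.norm_sub_le (mem_ball_prod_prod.2 ⟨mem_ball_self hδ, mem_ball_self hδ, hk⟩)
    (mem_ball_prod_prod.2 ⟨mem_ball_self hδ, mem_ball_self hδ, mem_ball_self hδ⟩)

lemma norm_sub_sub_le (hφ : IsLocalDivDiff 𝕜 f φ a δ)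
    (hlip : LipschitzOnWith K (fun p : E × E × E => φ p.1 p.2.1 p.2.2) (ball (a, a, 0) δ))
    {h : E} (hh : ‖h‖ < δ / 2) : ‖f (a + h) - f a - φ a a h‖ ≤ 2 * K / δ * ‖h‖ ^ 2 := by
  have hδ : 0 < δ := by linarith [norm_nonneg h]
  have hah : a + h ∈ ball a δ := by rw [mem_ball_iff_norm, add_sub_cancel_left]; linarith
  rw [← hφ.apply_of_sub_eq (add_sub_cancel_left a h) (mem_ball_prod_prod.2
    ⟨hah, mem_ball_self hδ, by rw [mem_ball_zero_iff]; linarith⟩)]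
  refine (hφ.norm_sub_apply_le hlip hah (mem_ball_self hδ) (mem_ball_self hδ)
    (mem_ball_self hδ) hh).trans_eq ?_
  rw [add_sub_cancel_left, sub_self, norm_zero, add_zero]
  ring

lemma norm_map_add_sub_le (hφ : IsLocalDivDiff 𝕜 f φ a δ)
    (hlip : LipschitzOnWith K (fun p : E × E × E => φ p.1 p.2.1 p.2.2) (ball (a, a, 0) δ))
    {u w : E} (hu : ‖u‖ < δ / 4) (hw : ‖w‖ < δ / 4) :
    ‖φ a a (u + w) - φ a a u - φ a a w‖ ≤ 8 * K / δ * (‖u‖ + ‖w‖) ^ 2 := by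
  have hδ : 0 < δ := by linarith [norm_nonneg u]
  have huw : ‖u + w‖ ≤ ‖u‖ + ‖w‖ := norm_add_le u w
  have hmem : ∀ v : E, ‖v‖ < δ / 2 → a + v ∈ ball a δ := fun v hv => by
    rw [mem_ball_iff_norm, add_sub_cancel_left]; linarith
  have hsmall : ∀ v : E, ‖v‖ < δ / 2 → v ∈ ball (0 : E) δ := fun v hv => by
    rw [mem_ball_zero_iff]; linarith
  have ha := mem_ball_self (x := a) hδ
  have h₁ := hmem (u + w) (by linarith)
  have h₂ := hmem u (by linarith)
  have hsplit : φ (a + (u + w)) a (u + w) = φ (a + (u + w)) (a + u) w + φ (a + u) a u := by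
    rw [hφ.apply_of_sub_eq (add_sub_cancel_left a _)
        (mem_ball_prod_prod.2 ⟨h₁, ha, hsmall _ (by linarith)⟩),
      hφ.apply_of_sub_eq (by abel) (mem_ball_prod_prod.2 ⟨h₁, h₂, hsmall _ (by linarith)⟩),
      hφ.apply_of_sub_eq (add_sub_cancel_left a _)
        (mem_ball_prod_prod.2 ⟨h₂, ha, hsmall _ (by linarith)⟩)]
    abel
  have e₁ := hφ.norm_sub_apply_le hlip ha ha h₁ ha (k := u + w) (by linarith)
  have e₂ := hφ.norm_sub_apply_le hlip ha ha h₁ h₂ (k := w) (by linarith)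
  have e₃ := hφ.norm_sub_apply_le hlip ha ha h₂ ha (k := u) (by linarith)
  simp only [sub_add_cancel_left, norm_neg, sub_self, norm_zero, add_zero] at e₁ e₂ e₃
  set c := 2 * (K : ℝ) / δ
  have hc : 0 ≤ c := by positivity
  calc ‖φ a a (u + w) - φ a a u - φ a a w‖
      = ‖(φ a a (u + w) - φ (a + (u + w)) a (u + w)) - (φ a a u - φ (a + u) a u)
          - (φ a a w - φ (a + (u + w)) (a + u) w)‖ := by rw [hsplit]; congr 1; abel
    _ ≤ c * ‖u + w‖ * ‖u + w‖ + c * ‖u‖ * ‖u‖ + c * (‖u + w‖ + ‖u‖) * ‖w‖ :=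
        (norm_sub_le _ _).trans (add_le_add ((norm_sub_le _ _).trans (add_le_add e₁ e₃)) e₂)
    _ ≤ c * (‖u‖ + ‖w‖) * (‖u‖ + ‖w‖) + c * (‖u‖ + ‖w‖) * (‖u‖ + ‖w‖)
          + c * (2 * (‖u‖ + ‖w‖)) * (‖u‖ + ‖w‖) := by
        gcongr <;> linarith [norm_nonneg u, norm_nonneg w]
    _ = 8 * K / δ * (‖u‖ + ‖w‖) ^ 2 := by ring

lemma map_add (hφ : IsLocalDivDiff 𝕜 f φ a δ)
    (hlip : LipschitzOnWith K (fun p : E × E × E => φ p.1 p.2.1 p.2.2) (ball (a, a, 0) δ))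
    {u w : E} (hu : ‖u‖ < δ / 4) (hw : ‖w‖ < δ / 4) : φ a a (u + w) = φ a a u + φ a a w := by
  have hδ : 0 < δ := by linarith [norm_nonneg u]
  set B := 8 * K / δ * (‖u‖ + ‖w‖) ^ 2
  -- the defect is homogeneous of degree one, yet bounded quadratically
  have hdefect : ∀ s ∈ Set.Ioc (0 : ℝ) 1, ‖φ a a (u + w) - φ a a u - φ a a w‖ ≤ B * s := by
    rintro s ⟨hs0, hs1⟩
    have hs : ‖(s : 𝕜)‖ = s := by rw [RCLike.norm_ofReal, abs_of_pos hs0]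
    have hle : ∀ v : E, ‖(s : 𝕜) • v‖ ≤ ‖v‖ := fun v => by
      rw [norm_smul, hs]; exact mul_le_of_le_one_left (norm_nonneg v) hs1
    have hsm : ∀ v : E, ‖v‖ < δ → φ a a ((s : 𝕜) • v) = (s : 𝕜) • φ a a v := fun v hv =>
      hφ.map_smul_of_mem (mem_ball_self hδ) (mem_ball_self hδ) v (mem_ball_zero_iff.2 hv) _
        (hs.trans_le hs1)
    have key := hφ.norm_map_add_sub_le hlip ((hle u).trans_lt hu) ((hle w).trans_lt hw)
    rw [← smul_add, hsm _ (by linarith [norm_add_le u w]), hsm u (by linarith),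
      hsm w (by linarith), ← smul_sub, ← smul_sub, norm_smul, norm_smul, norm_smul, hs] at key
    exact le_of_mul_le_mul_left (key.trans_eq (by ring)) hs0
  have hlim : Tendsto (fun s : ℝ => B * s) (𝓝[>] 0) (𝓝 0) := by
    simpa using ((tendsto_id (x := 𝓝 (0 : ℝ))).const_mul B).mono_left nhdsWithin_le_nhds
  rw [← sub_eq_zero, ← sub_sub, ← norm_le_zero_iff]
  exact ge_of_tendsto hlim (eventually_of_mem (Ioc_mem_nhdsGT one_pos) hdefect)

theorem exists_hasFDerivAt (hφ : IsLocalDivDiff 𝕜 f φ a δ) (hδ : 0 < δ)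
    (hlip : LipschitzOnWith K (fun p : E × E × E => φ p.1 p.2.1 p.2.2) (ball (a, a, 0) δ)) :
    ∃ L : E →L[𝕜] F, HasFDerivAt f L a ∧ ∀ᶠ k in 𝓝 0, L k = φ a a k := by
  have hsmall : ball (0 : E) (δ / 4) ⊆ ball 0 δ := ball_subset_ball (by linarith)
  obtain ⟨L, hL⟩ := exists_continuousLinearMap_eqOn_ball (by positivity : 0 < δ / 4)
    (fun u hu w hw _ => hφ.map_add hlip (mem_ball_zero_iff.1 hu) (mem_ball_zero_iff.1 hw))
    (fun u hu => hφ.map_smul_of_mem (mem_ball_self hδ) (mem_ball_self hδ) u (hsmall hu))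
    (fun u hu => hφ.norm_apply_le hlip (hsmall hu))
  have hLφ : ∀ᶠ k in 𝓝 0, L k = φ a a k := eventually_of_mem (ball_mem_nhds _ (by positivity)) hL
  refine ⟨L, ?_, hLφ⟩
  rw [hasFDerivAt_iff_isLittleO_nhds_zero]
  refine IsBigO.trans_isLittleO (g := fun h : E => ‖h‖ ^ 2) ?_ (isLittleO_norm_pow_id one_lt_two)
  refine IsBigO.of_bound (2 * K / δ) ?_
  filter_upwards [hLφ, ball_mem_nhds (0 : E) (half_pos hδ)] with h hLh hh
  rw [hLh, Real.norm_of_nonneg (by positivity)]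
  exact hφ.norm_sub_sub_le hlip (mem_ball_zero_iff.1 hh)

end IsLocalDivDiff

end LocalDivDiff

noncomputable section

section BlockMatrices

variable {n m : ℕ}

lemma blk_mul (A A' : Mat n) (B B' : Matrix (Fin n) (Fin m) ℂ) (C C' : Matrix (Fin m) (Fin n) ℂ)
    (D D' : Mat m) :
    blk A B C D * blk A' B' C' D' =
      blk (A * A' + B * C') (A * B' + B * D') (C * A' + D * C') (C * B' + D * D') := by
  rw [blk, blk, blk, reindex_apply, reindex_apply, reindex_apply, submatrix_mul_equiv,
    fromBlocks_multiply]

lemma blk_one : (blk 1 0 0 1 : Mat (n + m)) = 1 := by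
  rw [blk, fromBlocks_one, reindex_apply, submatrix_one_equiv]

lemma blk_add (A A' : Mat n) (B B' : Matrix (Fin n) (Fin m) ℂ) (C C' : Matrix (Fin m) (Fin n) ℂ)
    (D D' : Mat m) : blk A B C D + blk A' B' C' D' = blk (A + A') (B + B') (C + C') (D + D') := by
  simp only [blk, reindex_apply, ← fromBlocks_add]
  rfl

lemma smul_blk (c : ℂ) (A : Mat n) (B : Matrix (Fin n) (Fin m) ℂ) (C : Matrix (Fin m) (Fin n) ℂ)
    (D : Mat m) : c • blk A B C D = blk (c • A) (c • B) (c • C) (c • D) := by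
  simp only [blk, reindex_apply, ← fromBlocks_smul]
  rfl

lemma exists_eq_blk (M : Mat (n + m)) : ∃ A B C D, M = blk A B C D := by
  set M' := reindex finSumFinEquiv.symm finSumFinEquiv.symm M
  refine ⟨M'.toBlocks₁₁, M'.toBlocks₁₂, M'.toBlocks₂₁, M'.toBlocks₂₂, ?_⟩
  rw [blk, fromBlocks_toBlocks]
  simp [M']

lemma isUnit_and_inv_eq_of_mul_eq_one {A B : Mat n} (h : B * A = 1) : IsUnit A ∧ A⁻¹ = B :=
  ⟨(isUnit_iff_isUnit_det A).2 (isUnit_det_of_left_inverse h), inv_eq_left_inv h⟩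

lemma blk_neg_mul_blk (G : Matrix (Fin n) (Fin m) ℂ) : blk 1 (-G) 0 1 * blk 1 G 0 1 = 1 := by
  simp [blk_mul, blk_one]

lemma blk_inv_smul_mul_blk {t : ℂ} (ht : t ≠ 0) :
    (blk 1 0 0 (t⁻¹ • 1) : Mat (n + m)) * blk 1 0 0 (t • 1) = 1 := by
  simp [blk_mul, smul_smul, mul_inv_cancel₀ ht, blk_one]

def topRight : Mat (n + m) →L[ℂ] Matrix (Fin n) (Fin m) ℂ :=
  LinearMap.toContinuousLinearMap
    { toFun := fun M => (reindex finSumFinEquiv.symm finSumFinEquiv.symm M).toBlocks₁₂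
      map_add' := fun _ _ => rfl
      map_smul' := fun _ _ => rfl }

@[simp]
lemma topRight_blk (A : Mat n) (B : Matrix (Fin n) (Fin m) ℂ) (C : Matrix (Fin m) (Fin n) ℂ)
    (D : Mat m) : topRight (blk A B C D) = B := by
  simp [topRight, blk, toBlocks_fromBlocks₁₂]

end BlockMatrices

section NCDiff

variable {d n : ℕ}

def blockUpper : MatTup d n × MatTup d n × MatTup d n →L[ℂ] MatTup d (n + n) :=
  LinearMap.toContinuousLinearMap
    { toFun := fun p r => blk (p.1 r) (p.2.2 r) 0 (p.2.1 r)
      map_add' := fun p q => by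
        ext r : 1
        simp [blk_add]
      map_smul' := fun c p => by
        ext r : 1
        simp [smul_blk] }

lemma blockUpper_apply (x y k : MatTup d n) (r : Fin d) :
    blockUpper (x, y, k) r = blk (x r) (k r) 0 (y r) := rfl

lemma blockUpper_zero (x y : MatTup d n) : blockUpper (x, y, 0) = dSum x y := rfl

/-- `Δf(x, y)[k]`. -/
def ncDiff (f : ∀ m, MatTup d m → Mat m) (x y k : MatTup d n) : Mat n :=
  topRight (f (n + n) (blockUpper (x, y, k)))

lemma simConj_dSum (G : Mat n) (x y : MatTup d n) :
    simConj (blk 1 G 0 1) (dSum x y) = blockUpper (x, y, fun r => x r * G - G * y r) := by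
  ext r : 1
  simp [simConj, dSum, blockUpper_apply,
    (isUnit_and_inv_eq_of_mul_eq_one (blk_neg_mul_blk G)).2, blk_mul, sub_eq_add_neg]

lemma simConj_blockUpper {t : ℂ} (ht : t ≠ 0) (x y k : MatTup d n) :
    simConj (blk 1 0 0 (t • 1)) (blockUpper (x, y, k)) = blockUpper (x, y, t • k) := by
  ext r : 1
  simp [simConj, blockUpper_apply, (isUnit_and_inv_eq_of_mul_eq_one (blk_inv_smul_mul_blk ht)).2,
    blk_mul, smul_smul, mul_inv_cancel₀ ht]

lemma topRight_conj_blk_smul (t : ℂ) (M : Mat (n + n)) :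
    topRight (blk 1 0 0 (t⁻¹ • 1) * M * blk 1 0 0 (t • 1)) = t • topRight M := by
  obtain ⟨A, B, C, D, rfl⟩ := exists_eq_blk M
  simp [blk_mul]

end NCDiff

namespace IsNCFunctionOn

variable {d n : ℕ} {Ω U : Set (MSpace d)} {f : ∀ m, MatTup d m → Mat m}

lemma mono (hf : IsNCFunctionOn Ω f) (hU : U ⊆ Ω) : IsNCFunctionOn U f :=
  ⟨fun x y hx hy hxy => hf.dsum_eq x y (hU hx) (hU hy) (hU hxy),
    fun s x hs hx hsx => hf.sim_eq s x hs (hU hx) (hU hsx)⟩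

lemma ncDiff_comm (hf : IsNCFunctionOn Ω f) {x y : MatTup d n} (G : Mat n)
    (hx : (⟨n, x⟩ : MSpace d) ∈ Ω) (hy : (⟨n, y⟩ : MSpace d) ∈ Ω)
    (hxy : (⟨n + n, dSum x y⟩ : MSpace d) ∈ Ω)
    (hX : (⟨n + n, blockUpper (x, y, fun r => x r * G - G * y r)⟩ : MSpace d) ∈ Ω) :
    ncDiff f x y (fun r => x r * G - G * y r) = f n x * G - G * f n y := by
  obtain ⟨hunit, hinv⟩ := isUnit_and_inv_eq_of_mul_eq_one (blk_neg_mul_blk G)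
  rw [← simConj_dSum] at hX
  rw [ncDiff, ← simConj_dSum, hf.sim_eq _ _ hunit hxy hX, hf.dsum_eq x y hx hy hxy, hinv]
  simp [blk_mul, sub_eq_add_neg]

lemma ncDiff_zero (hf : IsNCFunctionOn Ω f) {x y : MatTup d n}
    (hx : (⟨n, x⟩ : MSpace d) ∈ Ω) (hy : (⟨n, y⟩ : MSpace d) ∈ Ω)
    (hxy : (⟨n + n, dSum x y⟩ : MSpace d) ∈ Ω) : ncDiff f x y 0 = 0 := by
  have h0 : (fun r => x r * 0 - 0 * y r) = (0 : MatTup d n) := by ext; simp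
  have := hf.ncDiff_comm 0 hx hy hxy (by rwa [h0, blockUpper_zero])
  rwa [h0, mul_zero, zero_mul, sub_zero] at this

lemma ncDiff_smul (hf : IsNCFunctionOn Ω f) {x y k : MatTup d n} {t : ℂ} (ht : t ≠ 0)
    (hk : (⟨n + n, blockUpper (x, y, k)⟩ : MSpace d) ∈ Ω)
    (htk : (⟨n + n, blockUpper (x, y, t • k)⟩ : MSpace d) ∈ Ω) :
    ncDiff f x y (t • k) = t • ncDiff f x y k := by
  obtain ⟨hunit, hinv⟩ := isUnit_and_inv_eq_of_mul_eq_one (blk_inv_smul_mul_blk (n := n) ht)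
  rw [← simConj_blockUpper ht] at htk
  rw [ncDiff, ← simConj_blockUpper ht, hf.sim_eq _ _ hunit hk htk, hinv, topRight_conj_blk_smul,
    ncDiff]

end IsNCFunctionOn

end

section FineHolomorphic

variable {d n : ℕ} {U : Set (MSpace d)} {f : ∀ m, MatTup d m → Mat m}

lemma IsNCDomain.eventually_mem_blockUpper (hU : IsNCDomain U) {b : MatTup d n}
    (hb : (⟨n, b⟩ : MSpace d) ∈ U) :
    ∀ᶠ p in 𝓝 (b, b, 0), (⟨n, p.1⟩ : MSpace d) ∈ U ∧ (⟨n, p.2.1⟩ : MSpace d) ∈ U ∧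
      (⟨n + n, blockUpper p⟩ : MSpace d) ∈ U := by
  have hslice : ∀ {m} {z : MatTup d m}, (⟨m, z⟩ : MSpace d) ∈ U →
      {z' : MatTup d m | (⟨m, z'⟩ : MSpace d) ∈ U} ∈ 𝓝 z :=
    fun hz => (hU.duOpen _).mem_nhds hz
  have hx : ∀ᶠ p in 𝓝 (b, b, (0 : MatTup d n)), (⟨n, p.1⟩ : MSpace d) ∈ U :=
    (continuous_fst.tendsto _).eventually_mem (hslice hb)
  have hy : ∀ᶠ p in 𝓝 (b, b, (0 : MatTup d n)), (⟨n, p.2.1⟩ : MSpace d) ∈ U :=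
    ((continuous_fst.comp continuous_snd).tendsto _).eventually_mem (hslice hb)
  have hdsum : Tendsto blockUpper (𝓝 (b, b, 0)) (𝓝 (dSum b b)) :=
    blockUpper.continuous.tendsto (b, b, 0)
  exact hx.and (hy.and (hdsum.eventually_mem (hslice (hU.dsum_mem b b hb hb))))

lemma IsNCFunctionOn.isLocalDivDiff (hf : IsNCFunctionOn U f) {b : MatTup d n} {δ : ℝ}
    (hball : ∀ p ∈ ball (b, b, 0) δ, (⟨n, p.1⟩ : MSpace d) ∈ U ∧ (⟨n, p.2.1⟩ : MSpace d) ∈ U ∧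
      (⟨n + n, blockUpper p⟩ : MSpace d) ∈ U) :
    IsLocalDivDiff ℂ (f n) (ncDiff f) b δ where
  apply_sub x y hxy := by
    obtain ⟨hx, hy, -⟩ := mem_ball_prod_prod.1 hxy
    have hxy0 := (hball (x, y, 0)
      (mem_ball_prod_prod.2 ⟨hx, hy, mem_ball_self (pos_of_mem_ball hx)⟩)).2.2
    have h1 : (fun r => x r * 1 - 1 * y r) = x - y := by ext; simp
    have := hf.ncDiff_comm 1 (hball _ hxy).1 (hball _ hxy).2.1 hxy0
      (by rw [h1]; exact (hball _ hxy).2.2)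
    rwa [h1, mul_one, one_mul] at this
  map_smul x y k hk t ht := by
    obtain ⟨hx, hy, hk'⟩ := mem_ball_prod_prod.1 hk
    have htk : (x, y, t • k) ∈ ball (b, b, 0) δ := by
      refine mem_ball_prod_prod.2 ⟨hx, hy, ?_⟩
      rw [mem_ball_zero_iff] at hk' ⊢
      rw [norm_smul]
      exact (mul_le_of_le_one_left (norm_nonneg k) ht).trans_lt hk'
    rcases eq_or_ne t 0 with rfl | ht0
    · rw [zero_smul] at htk
      rw [zero_smul, zero_smul]
      exact hf.ncDiff_zero (hball _ hk).1 (hball _ hk).2.1 (hball _ htk).2.2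
    · exact hf.ncDiff_smul ht0 (hball _ hk).2.2 (hball _ htk).2.2

lemma IsNCFunctionOn.exists_lipschitzOnWith (hU : IsNCDomain U) (hf : IsNCFunctionOn U f)
    {C : ℝ} (hC : ∀ x ∈ U, ‖f x.1 x.2‖ ≤ C) {b : MatTup d n} (hb : (⟨n, b⟩ : MSpace d) ∈ U) :
    ∃ ρ > 0, ∃ K, LipschitzOnWith K (f n) (ball b ρ) := by
  obtain ⟨δ, hδ, hgood⟩ := Metric.eventually_nhds_iff_ball.1 (hU.eventually_mem_blockUpper hb)
  refine ⟨δ / 4, by positivity, _, (hf.isLocalDivDiff hgood).lipschitzOnWith_of_bounded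
    (C := ‖(topRight : Mat (n + n) →L[ℂ] Mat n)‖ * C) fun p hp => ?_⟩
  exact (topRight.le_opNorm _).trans
    (mul_le_mul_of_nonneg_left (hC _ (hgood p hp).2.2) (norm_nonneg _))

theorem IsNCFunctionOn.exists_hasFDerivAt (hU : IsNCDomain U) (hf : IsNCFunctionOn U f)
    {C : ℝ} (hC : ∀ x ∈ U, ‖f x.1 x.2‖ ≤ C) {a : MatTup d n} (ha : (⟨n, a⟩ : MSpace d) ∈ U) :
    ∃ L : MatTup d n →L[ℂ] Mat n, HasFDerivAt (f n) L a ∧ ∀ᶠ k in 𝓝 0, L k = ncDiff f a a k := by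
  obtain ⟨ρ, hρ, K, hK⟩ := hf.exists_lipschitzOnWith hU hC (hU.dsum_mem a a ha ha)
  have hnear : ∀ᶠ p in 𝓝 (a, a, 0), blockUpper p ∈ ball (dSum a a) ρ :=
    (blockUpper.continuous.tendsto (a, a, 0)).eventually_mem (ball_mem_nhds _ hρ)
  obtain ⟨δ, hδ, hgood⟩ :=
    Metric.eventually_nhds_iff_ball.1 ((hU.eventually_mem_blockUpper ha).and hnear)
  exact (hf.isLocalDivDiff fun p hp => (hgood p hp).1).exists_hasFDerivAt hδ
    (topRight.lipschitz.comp_lipschitzOnWith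
      (hK.comp blockUpper.lipschitz.lipschitzOnWith fun p hp => (hgood p hp).2))

theorem IsNCFunctionOn.apply_comm_eq (hU : IsNCDomain U) (hf : IsNCFunctionOn U f)
    {a : MatTup d n} (ha : (⟨n, a⟩ : MSpace d) ∈ U) {L : MatTup d n →L[ℂ] Mat n}
    (hL : ∀ᶠ k in 𝓝 0, L k = ncDiff f a a k) (Γ : Mat n) :
    L (fun r => a r * Γ - Γ * a r) = f n a * Γ - Γ * f n a := by
  have hmem : ∀ᶠ k in 𝓝 0, (⟨n + n, blockUpper (a, a, k)⟩ : MSpace d) ∈ U :=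
    (tendsto_const_nhds.prodMk_nhds (tendsto_const_nhds.prodMk_nhds tendsto_id)).eventually
      (hU.eventually_mem_blockUpper ha) |>.mono fun _ h => h.2.2
  obtain ⟨ε, hε, hnear⟩ := Metric.eventually_nhds_iff_ball.1 (hL.and hmem)
  obtain ⟨s, hs, hsh⟩ := (eventually_smul_mem_ball ℂ (fun r => a r * Γ - Γ * a r) hε).exists
  have hcomm : s • (fun r => a r * Γ - Γ * a r) = fun r => a r * (s • Γ) - (s • Γ) * a r := by
    ext r : 1
    simp [smul_sub]
  obtain ⟨hLs, hXs⟩ := hnear _ hsh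
  rw [hcomm] at hLs hXs
  calc L (fun r => a r * Γ - Γ * a r) = s⁻¹ • L (s • fun r => a r * Γ - Γ * a r) := by
        rw [map_smul, inv_smul_smul₀ hs]
    _ = s⁻¹ • (f n a * (s • Γ) - (s • Γ) * f n a) := by
        rw [hcomm, hLs, hf.ncDiff_comm _ ha ha (hU.dsum_mem a a ha ha) hXs]
    _ = f n a * Γ - Γ * f n a := by
        rw [mul_smul_comm, smul_mul_assoc, ← smul_sub, inv_smul_smul₀ hs]

end FineHolomorphic

theorem deriv_commutator_general (d n : ℕ) (Ω : Set (MSpace d))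
    (f : ∀ m, MatTup d m → Mat m) (hf : IsFineHolo Ω f)
    (a : MatTup d n) (ha : (⟨n, a⟩ : MSpace d) ∈ Ω) (Γ : Mat n) :
    fderiv ℂ (f n) a (fun r => a r * Γ - Γ * a r) = f n a * Γ - Γ * f n a := by
  obtain ⟨-, hnc, hbdd⟩ := hf
  obtain ⟨U, hU, haU, hUΩ, C, hC⟩ := hbdd ⟨n, a⟩ ha
  have hfU := hnc.mono hUΩ
  obtain ⟨L, hL, hLφ⟩ := hfU.exists_hasFDerivAt hU hC haU
  rw [hL.fderiv]
  exact hfU.apply_comm_eq hU haU hLφ Γ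

/-- For a fine holomorphic function `f` on an nc domain `Ω`, the derivative in the
direction `aΓ - Γa` is `f(a)Γ - Γf(a)`. -/
theorem deriv_commutator (d n : ℕ) (Ω : Set (MSpace d)) (hΩ : IsNCDomain Ω)
    (f : ∀ m, MatTup d m → Mat m) (hf : IsFineHolo Ω f)
    (a : MatTup d n) (ha : (⟨n, a⟩ : MSpace d) ∈ Ω) (Γ : Mat n) :
    fderiv ℂ (f n) a (fun r => a r * Γ - Γ * a r) = f n a * Γ - Γ * f n a :=
  deriv_commutator_general d n Ω f hf a ha Γ
end
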